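/- arXiv:2106.00578 — 2 statements merged into one kernel-verified Lean document; each statement's English description precedes it below -/
import Mathlib

section
/- Fix an integer q ≥ 2 and for n ≥ 0 let c_n denote the number of 1-unbordered words of length n+1 over ℤ/qℤ whose first letter is q−2 (this number equals N_q(n,0), the number of short components of the tautological lamination at depth n). Then c_0 = 1, c_1 = q−2, c_{2n} = q·c_{2n−1} for all n ≥ 1, and c_{2n+1} = q·c_{2n} − 2·c_n for all n ≥ 0. -/
/-- For a word `W` over `ℤ/qℤ`, `addOneFirst W` is the word `W'` obtained by adding `1`
to the first letter of `W` (and the empty word for the empty word). -/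
def addOneFirst {q : ℕ} : List (ZMod q) → List (ZMod q)
  | [] => []
  | x :: xs => (x + 1) :: xs

/-- A word `W` over `ℤ/qℤ` is 1-unbordered if no nonempty proper suffix of `W` is equal
to a prefix of `W` or to a prefix of `W'` (where `W'` is `W` with `1` added to its first
letter). -/
def OneUnbordered {q : ℕ} (W : List (ZMod q)) : Prop :=
  ∀ S : List (ZMod q), S ≠ [] → S.length < W.length → S <:+ W →
    ¬ S <+: W ∧ ¬ S <+: addOneFirst W

/-- `c n` is the number of 1-unbordered words of length `n+1` over `ℤ/qℤ` whose first
letter is `q − 2`; this is `N_q(n,0)`, the number of short components of the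
tautological lamination at depth `n`. -/
noncomputable def shortCount (q n : ℕ) : ℕ :=
  Nat.card {w : List (ZMod q) //
    w.length = n + 1 ∧ OneUnbordered w ∧ w.head? = some ((q - 2 : ℕ) : ZMod q)}

/-!
Call `ℓ` a border length of `W` when the suffix of length `ℓ` of `W` is a prefix of `W` or of
`W'`. Two borders overlap: a border of length `ℓ > |W|/2` forces one of length `2ℓ - |W|`, so a
word is 1-unbordered iff it has no border of length at most `|W|/2`. Hence `c n` counts words of
length `n + 1` with first letter `q - 2` and no border of length `≤ k`, for any `k` between
`(n + 1)/2` and `n`. Inserting a letter in the middle of a word does not touch its borders of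
length `≤ k`, which multiplies such counts by `q`; this gives `c (2n) = q c (2n-1)`, and relates
the words of length `2n + 2` without border of length `≤ n` to those counted by `c (2n)`. Among
the former, those with a border of length `n + 1` are exactly `U U` and `U U'` for the words `U`
counted by `c n`, and `U ≠ U'` because `q ≥ 2`; this gives `c (2n+1) = q c (2n) - 2 c n`.
-/

namespace List

variable {α : Type*}

theorem drop_insertIdx_succ_of_le {l : List α} {i j : ℕ} (x : α) (hij : i ≤ j)
    (hi : i ≤ l.length) : (l.insertIdx i x).drop (j + 1) = l.drop j :=
  ext_getElem (by grind) (by grind)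

theorem modifyHead_insertIdx_of_pos {l : List α} {i : ℕ} (f : α → α) (x : α) (hi : 0 < i) :
    (l.insertIdx i x).modifyHead f = (l.modifyHead f).insertIdx i x := by
  cases l <;> obtain ⟨i, rfl⟩ := Nat.exists_eq_add_one.mpr hi <;> simp [insertIdx_succ_cons]

theorem head?_insertIdx_of_pos {l : List α} {i : ℕ} (x : α) (hi : 0 < i) :
    (l.insertIdx i x).head? = l.head? := by
  cases l <;> obtain ⟨i, rfl⟩ := Nat.exists_eq_add_one.mpr hi <;> simp [insertIdx_succ_cons]

theorem modifyHead_append_of_ne_nil {l₁ : List α} (f : α → α) (l₂ : List α) (h : l₁ ≠ []) :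
    (l₁ ++ l₂).modifyHead f = l₁.modifyHead f ++ l₂ := by
  cases l₁ <;> simp_all

theorem drop_two_mul_eq_take {W P : List α} {d : ℕ} (hd : 0 < d) (hPW : P.drop 1 = W.drop 1)
    (h : W.drop d = P.take (W.length - d)) : W.drop (2 * d) = P.take (W.length - 2 * d) := by
  have hshift : P.drop d = W.drop d := by
    obtain ⟨e, rfl⟩ := Nat.exists_eq_add_one.mpr hd
    rw [add_comm, ← drop_drop, hPW, drop_drop]
  calc W.drop (2 * d) = (P.take (W.length - d)).drop d := by rw [two_mul, ← drop_drop, h]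
    _ = (W.drop d).take (W.length - 2 * d) := by rw [drop_take, ← hshift]; congr 1; omega
    _ = P.take (W.length - 2 * d) := by rw [h, take_take]; congr 1; omega

end List

theorem Set.ncard_length_succ_of_insertIdx_iff {α : Type*} [Finite α] (P : List α → Prop)
    {m p : ℕ} (hp : p ≤ m) (hP : ∀ v x, v.length = m → (P (v.insertIdx p x) ↔ P v)) :
    {w : List α | w.length = m + 1 ∧ P w}.ncard
      = {v : List α | v.length = m ∧ P v}.ncard * Nat.card α := by
  have himage : {w : List α | w.length = m + 1 ∧ P w}
      = (fun vx : List α × α => vx.1.insertIdx p vx.2) ''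
          ({v : List α | v.length = m ∧ P v} ×ˢ Set.univ) := by
    ext w
    constructor
    · rintro ⟨hw, hPw⟩
      have hpw : p < w.length := by omega
      have hlen : (w.eraseIdx p).length = m := by
        rw [List.length_eraseIdx_of_lt hpw, hw]; rfl
      refine ⟨(w.eraseIdx p, w[p]), ⟨⟨hlen, ?_⟩, trivial⟩, List.insertIdx_eraseIdx_getElem hpw⟩
      rwa [← hP _ w[p] hlen, List.insertIdx_eraseIdx_getElem hpw]
    · rintro ⟨⟨v, x⟩, ⟨⟨hv, hPv⟩, -⟩, rfl⟩
      exact ⟨by simp [List.length_insertIdx, hv, hp], (hP v x hv).mpr hPv⟩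
  have hinj : Set.InjOn (fun vx : List α × α => vx.1.insertIdx p vx.2)
      ({v : List α | v.length = m ∧ P v} ×ˢ Set.univ) := by
    rintro ⟨v, x⟩ ⟨⟨hv, -⟩, -⟩ ⟨v', x'⟩ ⟨⟨hv', -⟩, -⟩ h
    have hx : x = x' := by
      have := congrArg (·[p]?) h
      simp only [List.getElem?_insertIdx_self, hv, hv', hp, if_true] at this
      exact Option.some_injective _ this
    have := congrArg (·.eraseIdx p) h
    simp only [List.eraseIdx_insertIdx_self] at this
    rw [this, hx]
  rw [himage, hinj.ncard_image, Set.ncard_prod, Set.ncard_univ]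

section

variable {q : ℕ}

theorem addOneFirst_eq_modifyHead (W : List (ZMod q)) :
    addOneFirst W = W.modifyHead (· + 1) := by
  cases W <;> rfl

@[simp]
theorem length_addOneFirst (W : List (ZMod q)) : (addOneFirst W).length = W.length := by
  rw [addOneFirst_eq_modifyHead, List.length_modifyHead]

theorem drop_one_addOneFirst (W : List (ZMod q)) : (addOneFirst W).drop 1 = W.drop 1 := by
  rw [addOneFirst_eq_modifyHead, List.drop_modifyHead_of_pos one_pos]

theorem addOneFirst_ne_self [Nontrivial (ZMod q)] {W : List (ZMod q)} (hW : W ≠ []) :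
    addOneFirst W ≠ W := by
  cases W <;> simp_all [addOneFirst]

def HasBorder (W : List (ZMod q)) (ℓ : ℕ) : Prop :=
  W.drop (W.length - ℓ) = W.take ℓ ∨ W.drop (W.length - ℓ) = (addOneFirst W).take ℓ

def NoBorderUpTo (W : List (ZMod q)) (k : ℕ) : Prop :=
  ∀ ℓ, 0 < ℓ → ℓ ≤ k → ¬ HasBorder W ℓ

theorem NoBorderUpTo.mono {W : List (ZMod q)} {k k' : ℕ} (h : NoBorderUpTo W k) (hk : k' ≤ k) :
    NoBorderUpTo W k' :=
  fun ℓ hℓ hℓk => h ℓ hℓ (hℓk.trans hk)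

theorem noBorderUpTo_succ_iff {W : List (ZMod q)} {k : ℕ} :
    NoBorderUpTo W (k + 1) ↔ NoBorderUpTo W k ∧ ¬ HasBorder W (k + 1) := by
  refine ⟨fun h => ⟨h.mono k.le_succ, h _ k.succ_pos le_rfl⟩, fun ⟨h, hb⟩ ℓ hℓ hℓk => ?_⟩
  rcases hℓk.lt_or_eq with hlt | rfl
  exacts [h ℓ hℓ (Nat.lt_succ_iff.mp hlt), hb]

theorem oneUnbordered_iff_noBorderUpTo (W : List (ZMod q)) :
    OneUnbordered W ↔ NoBorderUpTo W (W.length - 1) := by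
  constructor
  · intro h ℓ hℓ hℓW hb
    have hlen : (W.drop (W.length - ℓ)).length = ℓ := by simp; omega
    have hS := h _ (by rw [← List.length_pos_iff, hlen]; exact hℓ) (by rw [hlen]; omega)
      (List.drop_suffix _ _)
    rcases hb with hb | hb
    exacts [hS.1 (hb ▸ List.take_prefix _ _), hS.2 (hb ▸ List.take_prefix _ _)]
  · intro h S hS hSW hsuf
    have hb := h S.length (List.length_pos_iff.mpr hS) (by omega)
    rw [List.suffix_iff_eq_drop] at hsuf
    refine ⟨fun hp => hb (Or.inl ?_), fun hp => hb (Or.inr ?_)⟩ <;>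
      rw [← hsuf] <;> exact List.prefix_iff_eq_take.mp hp

theorem HasBorder.overlap {W : List (ZMod q)} {ℓ : ℕ} (hb : HasBorder W ℓ) (hℓ : ℓ < W.length)
    (hlong : W.length < 2 * ℓ) : HasBorder W (2 * ℓ - W.length) := by
  obtain ⟨d, hd, hdW, rfl⟩ : ∃ d, 0 < d ∧ d ≤ W.length ∧ ℓ = W.length - d :=
    ⟨W.length - ℓ, by omega, by omega, by omega⟩
  unfold HasBorder at hb ⊢
  rw [Nat.sub_sub_self hdW] at hb
  rw [show 2 * (W.length - d) - W.length = W.length - 2 * d by omega,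
    show W.length - (W.length - 2 * d) = 2 * d by omega]
  rcases hb with hb | hb
  · exact Or.inl (List.drop_two_mul_eq_take hd rfl hb)
  · exact Or.inr (List.drop_two_mul_eq_take hd (drop_one_addOneFirst W) hb)

theorem NoBorderUpTo.of_half {W : List (ZMod q)} (h : NoBorderUpTo W (W.length / 2)) :
    NoBorderUpTo W (W.length - 1) := by
  intro ℓ
  induction ℓ using Nat.strong_induction_on with
  | _ ℓ ih =>
    intro hℓ hℓW hb
    by_cases hhalf : ℓ ≤ W.length / 2
    · exact h ℓ hℓ hhalf hb
    · exact ih (2 * ℓ - W.length) (by omega) (by omega) (by omega)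
        (hb.overlap (by omega) (by omega))

theorem oneUnbordered_iff_noBorderUpTo_of_le {W : List (ZMod q)} {k : ℕ}
    (hk : W.length / 2 ≤ k) (hkW : k < W.length) :
    OneUnbordered W ↔ NoBorderUpTo W k := by
  rw [oneUnbordered_iff_noBorderUpTo]
  exact ⟨fun h => h.mono (by omega), fun h => (h.mono hk).of_half⟩

theorem hasBorder_insertIdx_iff {v : List (ZMod q)} {p ℓ : ℕ} (x : ZMod q) (hp : 0 < p)
    (hℓp : ℓ ≤ p) (hpℓ : p + ℓ ≤ v.length) :
    HasBorder (v.insertIdx p x) ℓ ↔ HasBorder v ℓ := by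
  have hdrop :
      (v.insertIdx p x).drop ((v.insertIdx p x).length - ℓ) = v.drop (v.length - ℓ) := by
    rw [List.length_insertIdx_of_le_length (by omega),
      show v.length + 1 - ℓ = v.length - ℓ + 1 by omega]
    exact List.drop_insertIdx_succ_of_le x (by omega) (by omega)
  simp only [HasBorder, addOneFirst_eq_modifyHead, hdrop,
    List.modifyHead_insertIdx_of_pos _ _ hp, List.take_insertIdx_eq_take_of_le _ _ _ _ hℓp]

theorem noBorderUpTo_insertIdx_iff {v : List (ZMod q)} {p k : ℕ} (x : ZMod q) (hp : 0 < p)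
    (hkp : k ≤ p) (hpk : p + k ≤ v.length) :
    NoBorderUpTo (v.insertIdx p x) k ↔ NoBorderUpTo v k :=
  forall₃_congr fun ℓ _ hℓk => not_congr (hasBorder_insertIdx_iff x hp (by omega) (by omega))

def borderFreeWords (a : ZMod q) (m k : ℕ) : Set (List (ZMod q)) :=
  {w | w.length = m ∧ w.head? = some a ∧ NoBorderUpTo w k}

theorem finite_borderFreeWords [NeZero q] (a : ZMod q) (m k : ℕ) :
    (borderFreeWords a m k).Finite :=
  (List.finite_length_eq (ZMod q) m).subset fun _ hw => hw.1

theorem ncard_borderFreeWords_length_succ [NeZero q] (a : ZMod q) {m k : ℕ} (hm : 0 < m)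
    (hk : 2 * k ≤ m) :
    (borderFreeWords a (m + 1) k).ncard = q * (borderFreeWords a m k).ncard := by
  -- Inserting at position `max k 1` keeps the first letter and all prefixes and suffixes of
  -- length `≤ k`.
  calc _ = (borderFreeWords a m k).ncard * Nat.card (ZMod q) :=
        Set.ncard_length_succ_of_insertIdx_iff _ (p := max k 1) (by omega) fun v x hv => ?_
    _ = q * (borderFreeWords a m k).ncard := by rw [Nat.card_zmod, mul_comm]
  rw [List.head?_insertIdx_of_pos x (by omega),
    noBorderUpTo_insertIdx_iff x (by omega) (le_max_left _ _) (by omega)]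

theorem ncard_borderFreeWords_eq_add [NeZero q] (a : ZMod q) (m k : ℕ) :
    (borderFreeWords a m k).ncard = (borderFreeWords a m (k + 1)).ncard
      + (borderFreeWords a m k ∩ {w | HasBorder w (k + 1)}).ncard := by
  have hdiff :
      borderFreeWords a m k \ {w | HasBorder w (k + 1)} = borderFreeWords a m (k + 1) := by
    ext w
    simp only [borderFreeWords, Set.mem_sdiff, Set.mem_ofPred_eq, noBorderUpTo_succ_iff,
      and_assoc]
  rw [← Set.ncard_inter_add_ncard_sdiff_eq_ncard _ _ (finite_borderFreeWords a m k), hdiff,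
    add_comm]

theorem hasBorder_append_iff {U V : List (ZMod q)} {ℓ : ℕ} (hVlen : V.length = U.length)
    (hV : V.drop 1 = U.drop 1) (hℓ : ℓ < U.length) :
    HasBorder (U ++ V) ℓ ↔ HasBorder U ℓ := by
  have hU : U ≠ [] := List.ne_nil_of_length_pos (by omega)
  have hdrop : (U ++ V).drop ((U ++ V).length - ℓ) = U.drop (U.length - ℓ) := by
    obtain ⟨e, he⟩ : ∃ e, U.length - ℓ = e + 1 := ⟨U.length - ℓ - 1, by omega⟩
    rw [List.length_append, show U.length + V.length - ℓ = U.length + (U.length - ℓ) by omega,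
      List.drop_length_add_append, he, add_comm, ← List.drop_drop, hV, List.drop_drop]
  have hℓ' : ℓ ≤ (U.modifyHead (· + 1)).length := by simpa using hℓ.le
  simp only [HasBorder, hdrop, addOneFirst_eq_modifyHead, List.modifyHead_append_of_ne_nil _ _ hU,
    List.take_append_of_le_length hℓ', List.take_append_of_le_length hℓ.le]

theorem append_mem_borderFreeWords_iff {U V : List (ZMod q)} {a : ZMod q} {L k : ℕ}
    (hU : U.length = L) (hVlen : V.length = L) (hV : V.drop 1 = U.drop 1) (hkL : k < L) :
    U ++ V ∈ borderFreeWords a (2 * L) k ↔ U ∈ borderFreeWords a L k := by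
  have hUne : U ≠ [] := List.ne_nil_of_length_pos (by omega)
  have hnb : NoBorderUpTo (U ++ V) k ↔ NoBorderUpTo U k :=
    forall₃_congr fun ℓ _ hℓk => not_congr (hasBorder_append_iff (by omega) hV (by omega))
  simp only [borderFreeWords, Set.mem_ofPred_eq, List.length_append, hU, hVlen, hnb,
    List.head?_append, Option.or_of_isSome (List.isSome_head?.mpr hUne), ← two_mul, true_and]

theorem hasBorder_append_length_iff {U V : List (ZMod q)} (hU : U ≠ [])
    (hV : V.length = U.length) :
    HasBorder (U ++ V) U.length ↔ V = U ∨ V = addOneFirst U := by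
  have hdrop : (U ++ V).drop ((U ++ V).length - U.length) = V := by
    rw [List.length_append, hV, Nat.add_sub_cancel, List.drop_left]
  have htake : (addOneFirst (U ++ V)).take U.length = addOneFirst U := by
    rw [addOneFirst_eq_modifyHead, addOneFirst_eq_modifyHead,
      List.modifyHead_append_of_ne_nil _ _ hU, List.take_left' List.length_modifyHead]
  rw [HasBorder, hdrop, htake, List.take_left]

theorem borderFreeWords_inter_hasBorder (a : ZMod q) {L k : ℕ} (hkL : k < L) :
    borderFreeWords a (2 * L) k ∩ {w | HasBorder w L}
      = (fun U => U ++ U) '' borderFreeWords a L k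
        ∪ (fun U => U ++ addOneFirst U) '' borderFreeWords a L k := by
  ext w
  constructor
  · rintro ⟨hw, hb⟩
    obtain ⟨U, V, rfl, hU⟩ : ∃ U V, w = U ++ V ∧ U.length = L :=
      ⟨w.take L, w.drop L, (List.take_append_drop _ _).symm, by simp; grind [borderFreeWords]⟩
    have hV : V.length = U.length := by grind [borderFreeWords]
    rw [Set.mem_ofPred_eq, ← hU,
      hasBorder_append_length_iff (List.ne_nil_of_length_pos (by omega)) hV] at hb
    rcases hb with hVU | hVU <;> rw [hVU] at hw hV ⊢
    · exact Or.inl ⟨U, (append_mem_borderFreeWords_iff hU hU rfl hkL).mp hw, rfl⟩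
    · refine Or.inr ⟨U, ?_, rfl⟩
      exact (append_mem_borderFreeWords_iff hU (hV.trans hU) (drop_one_addOneFirst U) hkL).mp hw
  · rintro (⟨U, hU, rfl⟩ | ⟨U, hU, rfl⟩) <;> have hUL : U.length = L := hU.1 <;>
      have hUne : U ≠ [] := List.ne_nil_of_length_pos (by omega)
    · refine ⟨(append_mem_borderFreeWords_iff hUL hUL rfl hkL).mpr hU, ?_⟩
      rw [Set.mem_ofPred_eq, ← hUL, hasBorder_append_length_iff hUne rfl]
      exact Or.inl rfl
    · refine ⟨(append_mem_borderFreeWords_iff hUL (by simpa) (drop_one_addOneFirst U) hkL).mpr hU,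
        ?_⟩
      rw [Set.mem_ofPred_eq, ← hUL, hasBorder_append_length_iff hUne (length_addOneFirst U)]
      exact Or.inr rfl

theorem ncard_borderFreeWords_inter_hasBorder [NeZero q] [Nontrivial (ZMod q)] (a : ZMod q)
    {L k : ℕ} (hkL : k < L) :
    (borderFreeWords a (2 * L) k ∩ {w | HasBorder w L}).ncard
      = 2 * (borderFreeWords a L k).ncard := by
  have hfin := finite_borderFreeWords a L k
  have hinj (f : List (ZMod q) → List (ZMod q)) (hf : ∀ U, (f U).length = U.length) :
      Set.InjOn (fun U => U ++ f U) (borderFreeWords a L k) := fun U hU U' hU' h =>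
    List.append_inj_left' h (by rw [hf, hf, hU.1, hU'.1])
  have hdisj : Disjoint ((fun U => U ++ U) '' borderFreeWords a L k)
      ((fun U => U ++ addOneFirst U) '' borderFreeWords a L k) := by
    refine Set.disjoint_left.mpr ?_
    rintro _ ⟨U, hU, rfl⟩ ⟨U', hU', h⟩
    obtain ⟨rfl, h'⟩ := List.append_inj h (by rw [hU.1, hU'.1])
    exact addOneFirst_ne_self (List.ne_nil_of_length_pos (by rw [hU.1]; omega)) h'
  rw [borderFreeWords_inter_hasBorder a hkL,
    Set.ncard_union_eq hdisj (hfin.image _) (hfin.image _),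
    Set.InjOn.ncard_image (f := fun U => U ++ U) (hinj id fun _ => rfl),
    (hinj addOneFirst length_addOneFirst).ncard_image, two_mul]

theorem shortCount_eq_ncard {n k : ℕ} (hk : (n + 1) / 2 ≤ k) (hkn : k ≤ n) :
    shortCount q n = (borderFreeWords ((q - 2 : ℕ) : ZMod q) (n + 1) k).ncard := by
  rw [shortCount, ← Nat.card_coe_set_eq]
  refine Nat.card_congr (Equiv.subtypeEquivRight fun w => ?_)
  simp only [borderFreeWords, Set.mem_ofPred_eq]
  constructor
  · rintro ⟨hw, hunb, ha⟩
    exact ⟨hw, ha, (oneUnbordered_iff_noBorderUpTo_of_le (by omega) (by omega)).mp hunb⟩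
  · rintro ⟨hw, ha, hnb⟩
    exact ⟨hw, (oneUnbordered_iff_noBorderUpTo_of_le (by omega) (by omega)).mpr hnb, ha⟩

theorem shortCount_zero : shortCount q 0 = 1 := by
  rw [shortCount_eq_ncard le_rfl le_rfl, Set.ncard_eq_one]
  refine ⟨[((q - 2 : ℕ) : ZMod q)], Set.eq_singleton_iff_unique_mem.mpr ⟨?_, ?_⟩⟩
  · exact ⟨rfl, rfl, fun ℓ hℓ hℓ0 => absurd hℓ0 (by omega)⟩
  · rintro w ⟨hw, ha, -⟩
    obtain ⟨x, rfl⟩ := List.length_eq_one_iff.mp hw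
    simp_all

theorem shortCount_two_mul [NeZero q] {n : ℕ} (hn : 1 ≤ n) :
    shortCount q (2 * n) = q * shortCount q (2 * n - 1) := by
  rw [shortCount_eq_ncard (k := n) (by omega) (by omega),
    shortCount_eq_ncard (k := n) (by omega) (by omega), Nat.sub_add_cancel (by omega)]
  exact ncard_borderFreeWords_length_succ _ (by omega) le_rfl

theorem shortCount_two_mul_add_one [NeZero q] [Nontrivial (ZMod q)] (n : ℕ) :
    shortCount q (2 * n + 1) + 2 * shortCount q n = q * shortCount q (2 * n) := by
  have hsplit := ncard_borderFreeWords_eq_add ((q - 2 : ℕ) : ZMod q) (2 * (n + 1)) n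
  rw [ncard_borderFreeWords_inter_hasBorder _ (Nat.lt_add_one n),
    show 2 * (n + 1) = 2 * n + 1 + 1 by ring,
    ncard_borderFreeWords_length_succ _ (by omega) (by omega)] at hsplit
  rw [shortCount_eq_ncard (k := n + 1) (by omega) (by omega),
    shortCount_eq_ncard (n := 2 * n) (k := n) (by omega) (by omega),
    shortCount_eq_ncard (n := n) (k := n) (by omega) le_rfl, hsplit]

end

/-- For `q ≥ 2`, the counts `c n = N_q(n,0)` satisfy `c 0 = 1`, `c 1 = q − 2`,
`c (2n) = q·c (2n−1)` for `n ≥ 1`, and `c (2n+1) = q·c (2n) − 2·c n` for `n ≥ 0`. -/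
theorem shortCount_recursion (q : ℕ) (hq : 2 ≤ q) :
    shortCount q 0 = 1 ∧
    (shortCount q 1 : ℤ) = q - 2 ∧
    (∀ n : ℕ, 1 ≤ n → shortCount q (2 * n) = q * shortCount q (2 * n - 1)) ∧
    (∀ n : ℕ,
      (shortCount q (2 * n + 1) : ℤ) = q * shortCount q (2 * n) - 2 * shortCount q n) := by
  have : Fact (1 < q) := ⟨hq⟩
  have : NeZero q := NeZero.of_gt hq
  have hodd (n : ℕ) :
      (shortCount q (2 * n + 1) : ℤ) = q * shortCount q (2 * n) - 2 * shortCount q n := by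
    rw [eq_sub_iff_add_eq]
    exact_mod_cast shortCount_two_mul_add_one n
  refine ⟨shortCount_zero, ?_, fun n hn => shortCount_two_mul hn, hodd⟩
  simpa [shortCount_zero] using hodd 0
end

section
/- Let T be a tree polynomial. Then for every non-leaf vertex v of T and every child w of v, ℓ(w) ≤ 2·ℓ(v), with equality if and only if every other child of v (every sibling of w) has ℓ equal to 1. -/
/-- A *tree polynomial* on a finite vertex type `V`: a finite rooted tree in which all
leaves have a common depth `n`, equipped with a critical/ordinary classification of
vertices, an order on the children of each vertex (encoded by `childIdx`, injective on
siblings), a simplicial self-map `f` compatible with this data, and a length function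
`ℓ` to the positive integers.

The tree is encoded by a `parent` function together with a `depth` function; children of
`v` are the non-root vertices `w` with `parent w = v`, and leaves are the childless
vertices. -/
structure TreePolynomial (V : Type*) [Fintype V] [DecidableEq V] where
  root : V
  parent : V → V
  depth : V → ℕ
  /-- the common depth of all leaves, the depth of the tree -/
  n : ℕ
  critical : V → Prop
  /-- the order on the children of each vertex: siblings are linearly ordered by
  `childIdx`. -/
  childIdx : V → ℕ
  /-- the simplicial self-map -/
  f : V → V
  /-- the length function -/
  ell : V → ℕ
  parent_root : parent root = root
  depth_root : depth root = 0
  depth_eq : ∀ v, v ≠ root → depth v = depth (parent v) + 1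
  depth_le : ∀ v, depth v ≤ n
  /-- all leaves (childless vertices) have the common depth `n` -/
  leaf_depth : ∀ v, (∀ w, w ≠ root → parent w ≠ v) → depth v = n
  root_critical : critical root
  /-- every critical non-leaf vertex has exactly one critical child -/
  crit_child : ∀ v, critical v → depth v < n →
    ∃! w, w ≠ root ∧ parent w = v ∧ critical w
  /-- ordinary vertices have no critical children -/
  ordinary_no_crit_child : ∀ v w, ¬ critical v → w ≠ root → parent w = v → ¬ critical w
  /-- `childIdx` is injective on siblings, so it linearly orders the children of each
  vertex -/
  childIdx_inj : ∀ w₁ w₂, w₁ ≠ root → w₂ ≠ root → parent w₁ = parent w₂ →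
    childIdx w₁ = childIdx w₂ → w₁ = w₂
  /-- the critical child of the root is first among its siblings -/
  root_crit_child_first : ∀ w w', w ≠ root → parent w = root → critical w →
    w' ≠ root → parent w' = root → childIdx w ≤ childIdx w'
  f_root : f root = root
  /-- `f v = root` for every child `v` of the root -/
  f_child_root : ∀ v, v ≠ root → parent v = root → f v = root
  /-- for `v` a child of a non-root vertex `w`, `f v` is a child of `f w` -/
  f_child : ∀ v, v ≠ root → parent v ≠ root → f v ≠ root ∧ parent (f v) = f (parent v)
  /-- for ordinary non-leaf `v`, `f` is injective on the children of `v` -/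
  f_ord_inj : ∀ v, ¬ critical v → ∀ w₁ w₂, w₁ ≠ root → w₂ ≠ root →
    parent w₁ = v → parent w₂ = v → f w₁ = f w₂ → w₁ = w₂
  /-- for ordinary non-leaf `v`, `f` maps the children of `v` onto the children of
  `f v` -/
  f_ord_surj : ∀ v, ¬ critical v → depth v < n → ∀ u, u ≠ root → parent u = f v →
    ∃ w, w ≠ root ∧ parent w = v ∧ f w = u
  /-- for ordinary non-leaf `v`, `f` is order-preserving on the children of `v` -/
  f_ord_mono : ∀ v, ¬ critical v → ∀ w₁ w₂, w₁ ≠ root → w₂ ≠ root →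
    parent w₁ = v → parent w₂ = v → childIdx w₁ ≤ childIdx w₂ →
    childIdx (f w₁) ≤ childIdx (f w₂)
  /-- for critical non-leaf non-root `v`, `f` maps the children of `v` onto the children
  of `f v` -/
  f_crit_surj : ∀ v, critical v → v ≠ root → depth v < n → ∀ u, u ≠ root →
    parent u = f v → ∃ w, w ≠ root ∧ parent w = v ∧ f w = u
  /-- for critical non-leaf non-root `v`, `f` is order non-decreasing on the children of
  `v` -/
  f_crit_mono : ∀ v, critical v → v ≠ root → ∀ w₁ w₂, w₁ ≠ root → w₂ ≠ root →
    parent w₁ = v → parent w₂ = v → childIdx w₁ ≤ childIdx w₂ →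
    childIdx (f w₁) ≤ childIdx (f w₂)
  /-- for critical non-leaf non-root `v` with critical child `c`, the map `f` on the
  children of `v` is 2-to-1 except that `c` is the unique child mapping to its image -/
  f_crit_fibers : ∀ v, critical v → v ≠ root → depth v < n →
    ∀ c, c ≠ root → parent c = v → critical c →
      ((∀ w, w ≠ root → parent w = v → f w = f c → w = c) ∧
       (∀ u, u ≠ root → parent u = f v → u ≠ f c →
         ∃ w₁ w₂, w₁ ≠ w₂ ∧ (w₁ ≠ root ∧ parent w₁ = v ∧ f w₁ = u) ∧
           (w₂ ≠ root ∧ parent w₂ = v ∧ f w₂ = u) ∧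
           ∀ w, w ≠ root → parent w = v → f w = u → w = w₁ ∨ w = w₂))
  ell_pos : ∀ v, 0 < ell v
  ell_root : ell root = 1
  ell_ordinary : ∀ v, ¬ critical v → ell v = ell (f v)
  ell_critical : ∀ v, critical v → v ≠ root → ell v = 2 * ell (f v)

namespace TreePolynomial

variable {V : Type*} [Fintype V] [DecidableEq V]

/-- The children of a vertex `v`: the non-root vertices whose parent is `v`. -/
def children (T : TreePolynomial V) (v : V) : Finset V :=
  Finset.univ.filter fun w => w ≠ T.root ∧ T.parent w = v

/-- The degree of a tree polynomial: one plus the number of children of the root. -/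
def degree (T : TreePolynomial V) : ℕ := 1 + (T.children T.root).card

end TreePolynomial

namespace TreePolynomial

variable {V : Type*} [Fintype V] [DecidableEq V]

lemma mem_children {T : TreePolynomial V} {v w : V} :
    w ∈ T.children v ↔ w ≠ T.root ∧ T.parent w = v := by
  simp [children]

lemma depth_f (T : TreePolynomial V) :
    ∀ d v, T.depth v = d → v ≠ T.root → T.depth (T.f v) + 1 = d := by
  intro d
  induction d using Nat.strong_induction_on with
  | _ d ih =>
    intro v hd hv
    by_cases hp : T.parent v = T.root
    · rw [T.f_child_root v hv hp, T.depth_root]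
      rw [T.depth_eq v hv, hp, T.depth_root] at hd
      omega
    · obtain ⟨hfv, hpf⟩ := T.f_child v hv hp
      have h1 : T.depth v = T.depth (T.parent v) + 1 := T.depth_eq v hv
      have h3 := ih (T.depth (T.parent v)) (by omega) (T.parent v) rfl hp
      have h2 : T.depth (T.f v) = T.depth (T.parent (T.f v)) + 1 := T.depth_eq _ hfv
      rw [hpf] at h2
      omega

/-- Key invariant: for any non-leaf vertex `v`,
`∑_{w child of v} (ℓ(w) - 1) = 2·ℓ(v) - 1`. -/
lemma sum_ell_children (T : TreePolynomial V) :
    ∀ v, T.depth v < T.n → ∑ w ∈ T.children v, (T.ell w - 1) = 2 * T.ell v - 1 := by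
  suffices key : ∀ d v, T.depth v = d → T.depth v < T.n →
      ∑ w ∈ T.children v, (T.ell w - 1) = 2 * T.ell v - 1 from
    fun v hv => key _ v rfl hv
  intro d
  induction d using Nat.strong_induction_on with
  | _ d ih =>
    intro v hd hn
    by_cases hroot : v = T.root
    · -- base case: the root
      subst hroot
      obtain ⟨c, ⟨hc, hpc, hcc⟩, hu⟩ := T.crit_child T.root T.root_critical hn
      have hcmem : c ∈ T.children T.root := mem_children.2 ⟨hc, hpc⟩
      rw [← Finset.add_sum_erase _ _ hcmem]
      have hlc : T.ell c = 2 := by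
        rw [T.ell_critical c hcc hc, T.f_child_root c hc hpc, T.ell_root]
      have : ∀ w ∈ (T.children T.root).erase c, T.ell w - 1 = 0 := by
        intro w hw
        obtain ⟨hwne, hwmem⟩ := Finset.mem_erase.1 hw
        obtain ⟨hw1, hw2⟩ := mem_children.1 hwmem
        have hword : ¬ T.critical w := fun hcrit => hwne (hu w ⟨hw1, hw2, hcrit⟩)
        rw [T.ell_ordinary w hword, T.f_child_root w hw1 hw2, T.ell_root]
      rw [Finset.sum_eq_zero this, hlc, T.ell_root]
      omega
    · -- inductive step: use f v
      have hdfv : T.depth (T.f v) + 1 = T.depth v := T.depth_f _ v rfl hroot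
      have hfvn : T.depth (T.f v) < T.n := by omega
      have IH := ih (T.depth (T.f v)) (by omega) (T.f v) rfl hfvn
      -- f maps children of v to children of f v
      have hmaps : ∀ w ∈ T.children v, T.f w ∈ T.children (T.f v) := by
        intro w hw
        obtain ⟨hw1, hw2⟩ := mem_children.1 hw
        obtain ⟨h1, h2⟩ := T.f_child w hw1 (hw2 ▸ hroot)
        exact mem_children.2 ⟨h1, by rw [h2, hw2]⟩
      by_cases hcrit : T.critical v
      · -- critical non-root case
        obtain ⟨c, ⟨hc, hpc, hcc⟩, hu⟩ := T.crit_child v hcrit hn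
        obtain ⟨hfib1, hfib2⟩ := T.f_crit_fibers v hcrit hroot hn c hc hpc hcc
        have hcmem : c ∈ T.children v := mem_children.2 ⟨hc, hpc⟩
        have hfcmem : T.f c ∈ T.children (T.f v) := hmaps c hcmem
        rw [← Finset.add_sum_erase _ _ hcmem]
        -- the erased sum is 2-to-1 onto (children (f v)).erase (f c)
        have hmaps' : ∀ w ∈ (T.children v).erase c, T.f w ∈ (T.children (T.f v)).erase (T.f c) := by
          intro w hw
          obtain ⟨hwne, hwmem⟩ := Finset.mem_erase.1 hw
          obtain ⟨hw1, hw2⟩ := mem_children.1 hwmem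
          refine Finset.mem_erase.2 ⟨fun h => hwne (hfib1 w hw1 hw2 h), hmaps w hwmem⟩
        rw [← Finset.sum_fiberwise_of_maps_to hmaps' (fun w => T.ell w - 1)]
        have hfibsum : ∀ u ∈ (T.children (T.f v)).erase (T.f c),
            ∑ w ∈ (T.children v).erase c with T.f w = u, (T.ell w - 1) = 2 * (T.ell u - 1) := by
          intro u hu'
          obtain ⟨hune, humem⟩ := Finset.mem_erase.1 hu'
          obtain ⟨hu1, hu2⟩ := mem_children.1 humem
          obtain ⟨w₁, w₂, hw12, ⟨h11, h12, h13⟩, ⟨h21, h22, h23⟩, hall⟩ :=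
            hfib2 u hu1 hu2 hune
          have hset : ((T.children v).erase c).filter (fun w => T.f w = u) = {w₁, w₂} := by
            ext x
            simp only [Finset.mem_filter, Finset.mem_erase, mem_children,
              Finset.mem_insert, Finset.mem_singleton]
            constructor
            · rintro ⟨⟨hx1, hx2, hx3⟩, hx4⟩
              exact hall x hx2 hx3 hx4
            · rintro (rfl | rfl)
              · exact ⟨⟨fun h => hune (h ▸ h13.symm), h11, h12⟩, h13⟩
              · exact ⟨⟨fun h => hune (h ▸ h23.symm), h21, h22⟩, h23⟩
          have hord : ∀ x, x ≠ T.root → T.parent x = v → T.f x = u → T.ell x = T.ell u := by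
            intro x hx1 hx2 hx3
            have hxord : ¬ T.critical x := fun hxc => hune (by
              have : x = c := hu x ⟨hx1, hx2, hxc⟩
              rw [← hx3, this])
            rw [T.ell_ordinary x hxord, hx3]
          rw [hset, Finset.sum_insert (by simpa using hw12), Finset.sum_singleton,
            hord w₁ h11 h12 h13, hord w₂ h21 h22 h23]
          omega
        rw [Finset.sum_congr rfl hfibsum]
        rw [← Finset.add_sum_erase _ _ hfcmem] at IH
        rw [← Finset.mul_sum]
        have hlc : T.ell c = 2 * T.ell (T.f c) := T.ell_critical c hcc hc
        have hlv : T.ell v = 2 * T.ell (T.f v) := T.ell_critical v hcrit hroot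
        have h1 := T.ell_pos (T.f c)
        have h2 := T.ell_pos (T.f v)
        omega
      · -- ordinary case: f is a bijection on children, preserving ell
        have hbij : ∑ w ∈ T.children v, (T.ell w - 1)
            = ∑ u ∈ T.children (T.f v), (T.ell u - 1) := by
          refine Finset.sum_bij (fun w _ => T.f w) hmaps ?_ ?_ ?_
          · intro w₁ hw₁ w₂ hw₂ heq
            obtain ⟨h11, h12⟩ := mem_children.1 hw₁
            obtain ⟨h21, h22⟩ := mem_children.1 hw₂
            exact T.f_ord_inj v hcrit w₁ w₂ h11 h21 h12 h22 heq
          · intro u hu'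
            obtain ⟨hu1, hu2⟩ := mem_children.1 hu'
            obtain ⟨w, hw1, hw2, hw3⟩ := T.f_ord_surj v hcrit hn u hu1 hu2
            exact ⟨w, mem_children.2 ⟨hw1, hw2⟩, hw3⟩
          · intro w hw
            obtain ⟨hw1, hw2⟩ := mem_children.1 hw
            have hword : ¬ T.critical w :=
              T.ordinary_no_crit_child v w hcrit hw1 hw2
            rw [T.ell_ordinary w hword]
        rw [hbij, IH, T.ell_ordinary v hcrit]

end TreePolynomial

open TreePolynomial in
/-- Let `T` be a tree polynomial. For every non-leaf vertex `v` of `T` and every child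
`w` of `v`, `ℓ(w) ≤ 2·ℓ(v)`, with equality if and only if every other child of `v`
(every sibling of `w`) has `ℓ` equal to `1`. -/
theorem TreePolynomial.ell_child_le_two_mul
    {V : Type*} [Fintype V] [DecidableEq V] (T : TreePolynomial V)
    (v : V) (hv : T.depth v < T.n) (w : V) (hw : w ∈ T.children v) :
    T.ell w ≤ 2 * T.ell v ∧
      (T.ell w = 2 * T.ell v ↔ ∀ w' ∈ T.children v, w' ≠ w → T.ell w' = 1) := by
  have hsum := T.sum_ell_children v hv
  rw [← Finset.add_sum_erase _ _ hw] at hsum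
  have hwpos := T.ell_pos w
  have hvpos := T.ell_pos v
  set S := ∑ w' ∈ (T.children v).erase w, (T.ell w' - 1) with hS
  refine ⟨by omega, ?_, ?_⟩
  · intro heq w' hw' hne
    have hS0 : S = 0 := by omega
    have h1 := Finset.sum_eq_zero_iff.1 hS0.symm.symm w' (Finset.mem_erase.2 ⟨hne, hw'⟩)
    have h2 := T.ell_pos w'
    omega
  · intro hall
    have hS0 : S = 0 := Finset.sum_eq_zero (fun w' hw' => by
      obtain ⟨hne, hmem⟩ := Finset.mem_erase.1 hw'
      simp [hall w' hmem hne])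
    omega
end
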